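/- Let A, B, C ∈ ℝ² be affinely independent, T = conv{A,B,C} the closed triangle with area |T| > 0, l = ‖B − A‖, ν = (B − A)/l the unit vector along the edge AB, and ρ : ℝ² → ℝ² the rotation by π/2 (ρ(x₁,x₂) = (−x₂, x₁)). Let ω_C : ℝ² → ℝ be the affine barycentric coordinate relative to C (ω_C(C) = 1, ω_C(A) = ω_C(B) = 0). Define the Rao–Wilton–Glisson function f(x) = (l/(2|T|))(x − C) and the Bendali multiplier function g(x) = (1 − 2ω_C(x)) ρ(ν). Then |∫_T f(x) · g(x) dx| = |T|/3. -/

import Mathlib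

open MeasureTheory Set

namespace RWGAux

/-- the closed standard simplex in `ℝ × ℝ` -/
def S : Set (ℝ × ℝ) := {p | 0 ≤ p.1 ∧ 0 ≤ p.2 ∧ p.1 + p.2 ≤ 1}

lemma isClosed_S : IsClosed S :=
  (isClosed_le continuous_const continuous_fst).inter
    ((isClosed_le continuous_const continuous_snd).inter
      (isClosed_le (continuous_fst.add continuous_snd) continuous_const))

lemma isCompact_S : IsCompact S := by
  refine IsCompact.of_isClosed_subset (isCompact_Icc (a := ((0:ℝ),(0:ℝ))) (b := (1,1)))
    isClosed_S ?_
  rintro ⟨x, y⟩ ⟨h1, h2, h3⟩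
  exact ⟨⟨h1, h2⟩, ⟨by dsimp at *; linarith, by dsimp at *; linarith⟩⟩

lemma integral_S (G : ℝ → ℝ) (hG : Continuous G) :
    ∫ p in S, G p.1 = ∫ v in Icc (0:ℝ) 1, (1 - v) * G v := by
  have hmeas : MeasurableSet S := isClosed_S.measurableSet
  have hint : Integrable (S.indicator fun p : ℝ × ℝ => G p.1) :=
    (((hG.comp continuous_fst).continuousOn).integrableOn_compact
      isCompact_S).integrable_indicator hmeas
  rw [← integral_indicator hmeas]
  rw [Measure.volume_eq_prod] at hint ⊢
  rw [integral_prod _ hint]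
  have key : ∀ v : ℝ, (∫ u : ℝ, S.indicator (fun p : ℝ × ℝ => G p.1) (v, u)) =
      (Icc (0:ℝ) 1).indicator (fun v => (1 - v) * G v) v := by
    intro v
    by_cases h0 : 0 ≤ v
    · have hfun : (fun u : ℝ => S.indicator (fun p : ℝ × ℝ => G p.1) (v, u)) =
          (Icc (0:ℝ) (1 - v)).indicator (fun _ => G v) := by
        funext u
        by_cases hu : (v, u) ∈ S
        · rw [indicator_of_mem hu, indicator_of_mem (mem_Icc.2 ⟨hu.2.1, by
            have := hu.2.2; dsimp at this ⊢; linarith⟩)]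
        · rw [indicator_of_notMem hu, indicator_of_notMem]
          intro hu'
          rw [mem_Icc] at hu'
          exact hu ⟨h0, hu'.1, by dsimp; linarith [hu'.2]⟩
      rw [hfun, integral_indicator measurableSet_Icc, setIntegral_const, measureReal_def, Real.volume_Icc,
        smul_eq_mul, sub_zero]
      by_cases h1 : v ≤ 1
      · rw [indicator_of_mem (mem_Icc.2 ⟨h0, h1⟩), ENNReal.toReal_ofReal (by linarith)]
      · rw [indicator_of_notMem (by rw [mem_Icc]; push_neg; intro; linarith),
          ENNReal.ofReal_eq_zero.2 (by linarith)]
        simp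
    · have hfun : (fun u : ℝ => S.indicator (fun p : ℝ × ℝ => G p.1) (v, u)) = fun _ => 0 := by
        funext u
        exact indicator_of_notMem (fun hu => h0 hu.1) _
      rw [hfun, integral_zero, indicator_of_notMem (by rw [mem_Icc]; push_neg; intro h; linarith)]
  simp only [key]
  rw [integral_indicator measurableSet_Icc]

lemma I1 : ∫ v in Icc (0:ℝ) 1, (1 - v) * (1:ℝ) = 1/2 := by
  rw [integral_Icc_eq_integral_Ioc, ← intervalIntegral.integral_of_le zero_le_one]
  have hd : ∀ v ∈ uIcc (0:ℝ) 1, HasDerivAt (fun v : ℝ => v - v^2/2) ((1 - v) * 1) v := by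
    intro v _
    have := (hasDerivAt_id v).sub ((hasDerivAt_pow 2 v).div_const 2)
    refine this.congr_deriv ?_
    push_cast
    ring
  rw [intervalIntegral.integral_eq_sub_of_hasDerivAt hd
    (by apply Continuous.intervalIntegrable; continuity)]
  norm_num

lemma I2 : ∫ v in Icc (0:ℝ) 1, (1 - v) * ((1 - 2*v) * (v - 1)) = -(1/6) := by
  rw [integral_Icc_eq_integral_Ioc, ← intervalIntegral.integral_of_le zero_le_one]
  have hd : ∀ v ∈ uIcc (0:ℝ) 1,
      HasDerivAt (fun v : ℝ => ((-v + 2*v^2) - 5/3*v^3) + 1/2*v^4)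
        ((1 - v) * ((1 - 2*v) * (v - 1))) v := by
    intro v _
    have h1 := (hasDerivAt_id v).neg
    have h2 := (hasDerivAt_pow 2 v).const_mul (2:ℝ)
    have h3 := (hasDerivAt_pow 3 v).const_mul (5/3:ℝ)
    have h4 := (hasDerivAt_pow 4 v).const_mul (1/2:ℝ)
    have := ((h1.add h2).sub h3).add h4
    refine this.congr_deriv ?_
    push_cast
    ring
  rw [intervalIntegral.integral_eq_sub_of_hasDerivAt hd
    (by apply Continuous.intervalIntegrable; continuity)]
  norm_num

noncomputable abbrev E2 := EuclideanSpace ℝ (Fin 2)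

noncomputable def eE : E2 ≃ᵐ ℝ × ℝ :=
  (MeasurableEquiv.toLp 2 (Fin 2 → ℝ)).symm.trans MeasurableEquiv.finTwoArrow

lemma eE_apply (p : E2) : eE p = (p 0, p 1) := rfl

lemma eE_mp : MeasurePreserving eE :=
  (volume_preserving_finTwoArrow ℝ).comp (EuclideanSpace.volume_preserving_symm_measurableEquiv_toLp (Fin 2))

/-- the closed standard simplex in the Euclidean plane -/
def S2 : Set E2 := eE ⁻¹' S

lemma mem_S2 {p : E2} : p ∈ S2 ↔ 0 ≤ p 0 ∧ 0 ≤ p 1 ∧ p 0 + p 1 ≤ 1 := Iff.rfl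

lemma S2_meas : MeasurableSet S2 := isClosed_S.measurableSet.preimage eE.measurable

lemma integral_S2 (G : ℝ → ℝ) (hG : Continuous G) :
    ∫ p in S2, G (p 0) = ∫ v in Icc (0:ℝ) 1, (1 - v) * G v := by
  have himg : eE '' S2 = S := Set.image_preimage_eq _ eE.surjective
  have h := eE_mp.setIntegral_image_emb eE.measurableEmbedding (fun q : ℝ × ℝ => G q.1) S2
  rw [himg] at h
  rw [← integral_S G hG, h]
  rfl

lemma ext2 {p q : E2} (h0 : p 0 = q 0) (h1 : p 1 = q 1) : p = q := by
  ext i; fin_cases i <;> assumption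

noncomputable def PB : E2 := EuclideanSpace.single 1 1
noncomputable def PC : E2 := EuclideanSpace.single 0 1

lemma PB0 : PB 0 = 0 := by simp [PB, EuclideanSpace.single_apply]
lemma PB1 : PB 1 = 1 := by simp [PB, EuclideanSpace.single_apply]
lemma PC0 : PC 0 = 1 := by simp [PC, EuclideanSpace.single_apply]
lemma PC1 : PC 1 = 0 := by simp [PC, EuclideanSpace.single_apply]

lemma S2_eq_hull : S2 = convexHull ℝ {(0 : E2), PB, PC} := by
  apply Subset.antisymm
  · intro p hp
    obtain ⟨h0, h1, hs⟩ := mem_S2.mp hp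
    rw [convexHull_insert ⟨PB, by simp⟩, mem_convexJoin]
    refine ⟨0, mem_singleton 0, ?_⟩
    rcases eq_or_lt_of_le (by positivity : (0:ℝ) ≤ p 0 + p 1) with h | h
    · refine ⟨PB, ?_, ?_⟩
      · rw [convexHull_pair]
        exact left_mem_segment ℝ PB PC
      · have hp0 : p 0 = 0 := by linarith
        have hp1 : p 1 = 0 := by linarith
        have : p = 0 := ext2 (by simp [hp0]) (by simp [hp1])
        rw [this]
        exact left_mem_segment ℝ 0 PB
    · set s := p 0 + p 1 with hs'
      refine ⟨(s⁻¹ * p 1) • PB + (s⁻¹ * p 0) • PC, ?_, ?_⟩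
      · rw [convexHull_pair]
        exact ⟨s⁻¹ * p 1, s⁻¹ * p 0, by positivity, by positivity,
          by field_simp; rw [hs']; ring, rfl⟩
      · refine ⟨1 - s, s, by linarith, le_of_lt h, by ring, ?_⟩
        apply ext2
        · simp only [PiLp.add_apply, PiLp.smul_apply, smul_eq_mul, smul_zero, zero_add,
            PB0, PC0]
          field_simp
          ring
        · simp only [PiLp.add_apply, PiLp.smul_apply, smul_eq_mul, smul_zero, zero_add,
            PB1, PC1]
          field_simp
          ring
  · apply convexHull_min
    · rintro x (rfl | rfl | rfl) <;> rw [mem_S2]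
      · exact ⟨le_refl 0, le_refl 0, by norm_num⟩
      · exact ⟨by rw [PB0], by rw [PB1]; norm_num, by rw [PB0, PB1]; norm_num⟩
      · exact ⟨by rw [PC0]; norm_num, by rw [PC1], by rw [PC0, PC1]; norm_num⟩
    · rintro x hx y hy a b ha hb hab
      obtain ⟨hx0, hx1, hxs⟩ := mem_S2.mp hx
      obtain ⟨hy0, hy1, hys⟩ := mem_S2.mp hy
      rw [mem_S2]
      refine ⟨?_, ?_, ?_⟩ <;>
        simp only [PiLp.add_apply, PiLp.smul_apply, smul_eq_mul]
      · positivity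
      · positivity
      · nlinarith

noncomputable def Lmap (u w : E2) : E2 →ₗ[ℝ] E2 where
  toFun p := p 1 • u + p 0 • w
  map_add' p q := by simp only [PiLp.add_apply, add_smul]; abel
  map_smul' c p := by
    simp only [PiLp.smul_apply, smul_eq_mul, mul_smul, smul_add, RingHom.id_apply]

lemma Lmap_apply (u w p : E2) : Lmap u w p = p 1 • u + p 0 • w := rfl

lemma Lmap_det (u w : E2) : LinearMap.det (Lmap u w) = w 0 * u 1 - u 0 * w 1 := by
  rw [← LinearMap.det_toMatrix (PiLp.basisFun 2 ℝ (Fin 2)), Matrix.det_fin_two]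
  simp [LinearMap.toMatrix_apply, Lmap_apply, PiLp.basisFun_repr, PiLp.basisFun_apply,
    PiLp.add_apply, PiLp.smul_apply, Pi.single_apply]

lemma Lmap_inj (u w : E2) (hd : u 0 * w 1 - u 1 * w 0 ≠ 0) :
    Function.Injective (Lmap u w) := by
  intro p q hpq
  have e0 : p 1 * u 0 + p 0 * w 0 = q 1 * u 0 + q 0 * w 0 := by
    have := congrArg (fun x : E2 => x 0) hpq
    simpa [Lmap_apply, PiLp.add_apply, PiLp.smul_apply] using this
  have e1 : p 1 * u 1 + p 0 * w 1 = q 1 * u 1 + q 0 * w 1 := by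
    have := congrArg (fun x : E2 => x 1) hpq
    simpa [Lmap_apply, PiLp.add_apply, PiLp.smul_apply] using this
  have ha : (p 0 - q 0) * (u 0 * w 1 - u 1 * w 0) = 0 := by
    linear_combination u 0 * e1 - u 1 * e0
  have hb : (p 1 - q 1) * (u 0 * w 1 - u 1 * w 0) = 0 := by
    linear_combination w 1 * e0 - w 0 * e1
  have ha' : p 0 = q 0 := by
    have := (mul_eq_zero.mp ha).resolve_right hd
    linarith
  have hb' : p 1 = q 1 := by
    have := (mul_eq_zero.mp hb).resolve_right hd
    linarith
  exact ext2 ha' hb'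

lemma inner2 (x y : E2) : (inner ℝ x y : ℝ) = x 0 * y 0 + x 1 * y 1 := by
  simp [PiLp.inner_apply, RCLike.inner_apply, Fin.sum_univ_two]
  ring

end RWGAux

open RWGAux

/-- Over a nondegenerate triangle `T = conv{A,B,C} ⊂ ℝ²`, the Rao–Wilton–Glisson basis
function `f(x) = (l/(2|T|))(x - C)` attached to the edge `AB` (of length `l = ‖B - A‖`,
unit direction `ν = (B - A)/l`) and the Bendali multiplier function
`g(x) = (1 - 2ω_C(x)) ρ(ν)`, where `ρ` is the rotation by `π/2`, satisfy
`|∫_T f · g| = |T|/3`. -/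
theorem abs_integral_rwg_dot_multiplier_triangle
    (A B C : EuclideanSpace ℝ (Fin 2))
    (hABC : AffineIndependent ℝ ![A, B, C])
    (T : Set (EuclideanSpace ℝ (Fin 2)))
    (hT : T = convexHull ℝ {A, B, C})
    (harea : 0 < (volume T).toReal)
    (l : ℝ) (hl : l = ‖B - A‖)
    (ν : EuclideanSpace ℝ (Fin 2)) (hν : ν = l⁻¹ • (B - A))
    (ρ : EuclideanSpace ℝ (Fin 2) → EuclideanSpace ℝ (Fin 2))
    (hρ : ∀ v : EuclideanSpace ℝ (Fin 2), ρ v 0 = -(v 1) ∧ ρ v 1 = v 0)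
    (ω : EuclideanSpace ℝ (Fin 2) →ᵃ[ℝ] ℝ)
    (hωC : ω C = 1) (hωA : ω A = 0) (hωB : ω B = 0)
    (f g : EuclideanSpace ℝ (Fin 2) → EuclideanSpace ℝ (Fin 2))
    (hf : ∀ x, f x = (l / (2 * (volume T).toReal)) • (x - C))
    (hg : ∀ x, g x = (1 - 2 * ω x) • ρ ν) :
    |∫ x in T, (inner ℝ (f x) (g x) : ℝ)| = (volume T).toReal / 3 := by
  set t := (volume T).toReal with ht'
  set u : E2 := B - A with hu'
  set w : E2 := C - A with hw'
  set d : ℝ := u 0 * w 1 - u 1 * w 0 with hd'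
  have ht0 : t ≠ 0 := ne_of_gt harea
  -- nondegeneracy
  have hcol : ¬ Collinear ℝ {A, B, C} := affineIndependent_iff_not_collinear_set.mp hABC
  have hCeq : C = w + A := by rw [hw']; abel
  have hBeq : B = u + A := by rw [hu']; abel
  have hd : d ≠ 0 := by
    intro h0
    apply hcol
    rw [collinear_iff_of_mem (Set.mem_insert A _)]
    by_cases hu0 : u 0 = 0
    · by_cases hu1 : u 1 = 0
      · -- u = 0
        have hu : u = 0 := ext2 (by simpa using hu0) (by simpa using hu1)
        refine ⟨w, ?_⟩
        rintro p (rfl | rfl | rfl)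
        · exact ⟨0, by simp⟩
        · exact ⟨0, by rw [hBeq, hu]; simp⟩
        · exact ⟨1, by rw [hCeq]; simp⟩
      · -- u 1 ≠ 0
        refine ⟨u, ?_⟩
        rintro p (rfl | rfl | rfl)
        · exact ⟨0, by simp⟩
        · exact ⟨1, by rw [hBeq]; simp⟩
        · refine ⟨w 1 / u 1, ?_⟩
          have hwu : w = (w 1 / u 1) • u := by
            apply ext2
            · rw [PiLp.smul_apply, smul_eq_mul]
              rw [hd'] at h0
              field_simp
              nlinarith [h0]
            · rw [PiLp.smul_apply, smul_eq_mul]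
              field_simp
          rw [vadd_eq_add, ← hwu, ← hCeq]
    · -- u 0 ≠ 0
      refine ⟨u, ?_⟩
      rintro p (rfl | rfl | rfl)
      · exact ⟨0, by simp⟩
      · exact ⟨1, by rw [hBeq]; simp⟩
      · refine ⟨w 0 / u 0, ?_⟩
        have hwu : w = (w 0 / u 0) • u := by
          apply ext2
          · rw [PiLp.smul_apply, smul_eq_mul]
            field_simp
          · rw [PiLp.smul_apply, smul_eq_mul]
            rw [hd'] at h0
            field_simp
            nlinarith [h0]
        rw [vadd_eq_add, ← hwu, ← hCeq]
  have hune : u ≠ 0 := by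
    intro h
    apply hd
    rw [hd', h]
    simp
  have hl0 : l ≠ 0 := by rw [hl]; exact norm_ne_zero_iff.mpr hune
  -- the parametrization
  set φ : E2 → E2 := fun p => Lmap u w p + A with hφ'
  set Lc : E2 →L[ℝ] E2 := LinearMap.toContinuousLinearMap (Lmap u w) with hLc'
  have hLcdet : Lc.det = -d := by
    have : (Lc : E2 →ₗ[ℝ] E2) = Lmap u w := LinearMap.coe_toContinuousLinearMap (Lmap u w)
    rw [ContinuousLinearMap.det, this, Lmap_det, hd']
    ring
  have hder : ∀ p ∈ S2, HasFDerivWithinAt φ Lc S2 p := fun p _ =>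
    ((Lc.hasFDerivAt.add_const A).hasFDerivWithinAt :)
  have hinj : Set.InjOn φ S2 := by
    have : Function.Injective φ := by
      intro p q h
      have h' : Lmap u w p + A = Lmap u w q + A := h
      exact Lmap_inj u w (by rw [← hd']; exact hd) (add_right_cancel h')
    exact this.injOn
  -- the image of the simplex is the triangle
  have e0 : φ 0 = A := by simp [hφ', Lmap_apply]
  have ePB : φ PB = B := by
    simp only [hφ', Lmap_apply, PB0, PB1, one_smul, zero_smul, add_zero]
    rw [hBeq]
  have ePC : φ PC = C := by
    simp only [hφ', Lmap_apply, PC0, PC1, one_smul, zero_smul, zero_add]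
    rw [hCeq]
  have hPhi : T = φ '' S2 := by
    set Φ : E2 →ᵃ[ℝ] E2 := (Lmap u w).toAffineMap + AffineMap.const ℝ E2 A with hΦ'
    have hΦcoe : ⇑Φ = φ := by
      funext p
      simp [hΦ', hφ']
    rw [hT, S2_eq_hull, ← hΦcoe, AffineMap.image_convexHull, hΦcoe,
      Set.image_insert_eq, Set.image_insert_eq, Set.image_singleton, e0, ePB, ePC]
  -- value of ω on the image
  have hlu : ω.linear u = 0 := by
    rw [hu', ← vsub_eq_sub, AffineMap.linearMap_vsub, hωB, hωA, vsub_eq_sub, sub_zero]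
  have hlw : ω.linear w = 1 := by
    rw [hw', ← vsub_eq_sub, AffineMap.linearMap_vsub, hωC, hωA, vsub_eq_sub, sub_zero]
  have hω : ∀ p : E2, ω (φ p) = p 0 := by
    intro p
    have h1 : ω (φ p) = ω.linear (Lmap u w p) +ᵥ ω A := by
      rw [show φ p = Lmap u w p +ᵥ A from rfl, AffineMap.map_vadd]
    rw [vadd_eq_add, hωA, add_zero] at h1
    rw [h1, Lmap_apply, LinearMap.map_add, LinearMap.map_smul, LinearMap.map_smul, hlu, hlw]
    simp
  -- volume identity : t = |d| / 2
  have hS2one : ∫ p in S2, (1:ℝ) = 1/2 := by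
    have h := integral_S2 (fun _ => (1:ℝ)) continuous_const
    rw [I1] at h
    exact h
  have hcv2 := integral_image_eq_integral_abs_det_fderiv_smul (f' := fun _ => Lc) volume
    S2_meas hder hinj (fun _ : E2 => (1:ℝ))
  have hvol : t = |d| / 2 := by
    have hTvol : ∫ x in T, (1:ℝ) = t := by
      rw [setIntegral_const, smul_eq_mul, mul_one, measureReal_def]
    rw [hPhi] at hTvol
    rw [hcv2] at hTvol
    simp only [hLcdet, abs_neg, smul_eq_mul, mul_one] at hTvol
    rw [setIntegral_const, smul_eq_mul, measureReal_def] at hTvol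
    have hms : ((volume S2).toReal : ℝ) = 1/2 := by
      rw [← hS2one, setIntegral_const, smul_eq_mul, mul_one, measureReal_def]
    rw [hms] at hTvol
    rw [← hTvol]
    ring
  have hdt : |d| = 2 * t := by rw [hvol]; ring
  -- the main integrand identity
  have hpt : ∀ p : E2, |Lc.det| • (inner ℝ (f (φ p)) (g (φ p)) : ℝ)
      = (|d| * d / (2*t)) * ((1 - 2 * p 0) * (p 0 - 1)) := by
    intro p
    rw [hf (φ p), hg (φ p), real_inner_smul_left, real_inner_smul_right, inner2, hω p,
      hLcdet, abs_neg, smul_eq_mul]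
    have c0 : (φ p - C) 0 = p 1 * u 0 + p 0 * w 0 - w 0 := by
      simp only [hφ', Lmap_apply, PiLp.sub_apply, PiLp.add_apply, PiLp.smul_apply, smul_eq_mul,
        hw']
      ring
    have c1 : (φ p - C) 1 = p 1 * u 1 + p 0 * w 1 - w 1 := by
      simp only [hφ', Lmap_apply, PiLp.sub_apply, PiLp.add_apply, PiLp.smul_apply, smul_eq_mul,
        hw']
      ring
    have r0 : ρ ν 0 = -(l⁻¹ * u 1) := by
      rw [(hρ ν).1, hν]
      simp [PiLp.smul_apply]
    have r1 : ρ ν 1 = l⁻¹ * u 0 := by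
      rw [(hρ ν).2, hν]
      simp [PiLp.smul_apply]
    rw [c0, c1, r0, r1, hd']
    field_simp
    ring
  -- the simplex integral
  have hS2int : ∫ p in S2, (1 - 2 * p 0) * (p 0 - 1) = -(1/6) := by
    have h := integral_S2 (fun v => (1 - 2*v) * (v - 1))
      (((continuous_const.sub (continuous_const.mul continuous_id)).mul
        (continuous_id.sub continuous_const)))
    rw [I2] at h
    exact h
  have hcv1 := integral_image_eq_integral_abs_det_fderiv_smul (f' := fun _ => Lc) volume
    S2_meas hder hinj (fun x : E2 => (inner ℝ (f x) (g x) : ℝ))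
  have hmain : ∫ x in T, (inner ℝ (f x) (g x) : ℝ) = (|d| * d / (2*t)) * (-(1/6)) := by
    rw [hPhi, hcv1]
    simp only [hpt]
    rw [MeasureTheory.integral_const_mul, hS2int]
  rw [hmain]
  have hfinal : |d| * d / (2 * t) * (-(1/6)) = -(d / 6) := by
    rw [hdt]
    field_simp
  rw [hfinal, abs_neg, abs_div, abs_of_pos (by norm_num : (0:ℝ) < 6), hdt]
  ring
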